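/- arXiv:0903.2114 — 2 statements merged into one kernel-verified Lean document; each statement's English description precedes it below -/
import Mathlib

section
/- Let τ be a stopping time with τ ≤ T_N, and define R̄₁ = R₁, R̄ₖ = Rₖ·1_{S_{k−1} ≤ R̄_{k−1}}, where (Rₙ) are the Davis representation variables satisfying τ ∧ T_{n+1} = (Tₙ + R_{n+1}) ∧ T_{n+1} on {τ ≥ Tₙ}. Then τ = Σ_{n=1}^∞ R̄ₙ ∧ Sₙ. -/
open MeasureTheory

theorem tau_eq_tsum_min
    {Ω : Type*}
    (T : ℕ → Ω → ℝ) (τ : Ω → ℝ) (R Rbar : ℕ → Ω → ℝ) (N : ℕ)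
    (hT0 : ∀ ω, T 0 ω = 0)
    (hTmono : ∀ n ω, T n ω < T (n + 1) ω)
    (hτ_nonneg : ∀ ω, 0 ≤ τ ω)
    (hτ_le : ∀ ω, τ ω ≤ T N ω)
    (hR_nonneg : ∀ n ω, 0 ≤ R n ω)
    -- Davis's representation: τ ∧ T_{n+1} = (T_n + R_{n+1}) ∧ T_{n+1} on {τ ≥ T_n}
    (hDavis : ∀ n ω, T n ω ≤ τ ω →
      min (τ ω) (T (n + 1) ω) = min (T n ω + R (n + 1) ω) (T (n + 1) ω))
    -- R̄₁ = R₁,  R̄ₖ = Rₖ · 1_{S_{k-1} ≤ R̄_{k-1}}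
    (hRbar1 : ∀ ω, Rbar 1 ω = R 1 ω)
    (hRbarSucc : ∀ k ω, Rbar (k + 2) ω =
      if T (k + 1) ω - T k ω ≤ Rbar (k + 1) ω then R (k + 2) ω else 0) :
    ∀ ω, τ ω = ∑' n : ℕ, min (Rbar (n + 1) ω) (T (n + 1) ω - T n ω) := by
  intro ω
  have hS : ∀ n, 0 < T (n + 1) ω - T n ω := fun n => sub_pos.mpr (hTmono n ω)
  have hEx : ∃ n, τ ω < T (n + 1) ω := ⟨N, lt_of_le_of_lt (hτ_le ω) (hTmono N ω)⟩
  set m := Nat.find hEx with hm_def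
  have hm : τ ω < T (m + 1) ω := Nat.find_spec hEx
  have hlt : ∀ k, k < m → T (k + 1) ω ≤ τ ω :=
    fun k hk => le_of_not_gt (Nat.find_min hEx hk)
  have hTm : T m ω ≤ τ ω := by
    rcases Nat.eq_zero_or_pos m with h | h
    · rw [h, hT0]; exact hτ_nonneg ω
    · obtain ⟨k, hk⟩ : ∃ k, m = k + 1 := ⟨m - 1, by omega⟩
      rw [hk]; exact hlt k (by omega)
  -- for k < m, R (k+1) ≥ S k
  have hRge : ∀ k, k < m → T (k + 1) ω - T k ω ≤ R (k + 1) ω := by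
    intro k hk
    have hTk : T k ω ≤ τ ω := le_trans (le_of_lt (hTmono k ω)) (hlt k hk)
    have hd := hDavis k ω hTk
    rw [min_eq_right (hlt k hk)] at hd
    by_contra h
    push_neg at h
    rw [min_eq_left (by linarith)] at hd
    linarith
  -- for k ≤ m, Rbar (k+1) = R (k+1)
  have hA : ∀ k, k ≤ m → Rbar (k + 1) ω = R (k + 1) ω := by
    intro k
    induction k with
    | zero => intro _; exact hRbar1 ω
    | succ n ih =>
      intro hkm
      have hnm : n < m := Nat.lt_of_succ_le hkm
      rw [hRbarSucc n ω, ih (le_of_lt hnm), if_pos (hRge n hnm)]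
  -- R (m+1) = τ - T m
  have hB : R (m + 1) ω = τ ω - T m ω := by
    have hd := hDavis m ω hTm
    rw [min_eq_left (le_of_lt hm)] at hd
    by_cases h : T m ω + R (m + 1) ω ≤ T (m + 1) ω
    · rw [min_eq_left h] at hd; linarith
    · push_neg at h
      rw [min_eq_right (le_of_lt h)] at hd
      linarith
  -- Rbar vanishes for indices ≥ m + 2
  have hC : ∀ j, m + 2 ≤ j → Rbar j ω = 0 := by
    intro j hj
    induction j, hj using Nat.le_induction with
    | base =>
      rw [hRbarSucc m ω, hA m le_rfl, hB,
        if_neg (not_le.mpr (by linarith))]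
    | succ j hj ih =>
      obtain ⟨i, rfl⟩ : ∃ i, j = i + 1 := ⟨j - 1, by omega⟩
      rw [hRbarSucc i ω, ih, if_neg (not_le.mpr (hS i))]
  have hzero : ∀ n ∉ Finset.range (m + 1),
      min (Rbar (n + 1) ω) (T (n + 1) ω - T n ω) = 0 := by
    intro n hn
    rw [Finset.mem_range, not_lt] at hn
    rw [hC (n + 1) (by omega), min_eq_left (le_of_lt (hS n))]
  rw [tsum_eq_sum hzero, Finset.sum_range_succ]
  have hfm : min (Rbar (m + 1) ω) (T (m + 1) ω - T m ω) = τ ω - T m ω := by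
    rw [hA m le_rfl, hB, min_eq_left (by linarith)]
  have hfk : ∀ k ∈ Finset.range m,
      min (Rbar (k + 1) ω) (T (k + 1) ω - T k ω) = T (k + 1) ω - T k ω := by
    intro k hk
    rw [Finset.mem_range] at hk
    rw [hA k (le_of_lt hk), min_eq_right (hRge k hk)]
  rw [Finset.sum_congr rfl hfk, hfm, Finset.sum_range_sub (fun n => T n ω), hT0]
  ring
end

section
/- Let Kw(x) = ∫₀^{t*(x)} λQw(φ(x,s)) e^{−Λ(x,s)} ds + Qw(φ(x,t*(x))) e^{−Λ(x,t*(x))}. Under the Lipschitz assumptions on λ, t*, Q and for w ∈ L^c (Lipschitz along trajectories with constants [w]₁, [w]₂, [w]_* and bound C_w), one has for all x, y ∈ E: |Kw(x) − Kw(y)| ≤ (C_w E₄ + [w]₁ E₂ + [w]_*[Q]) |x − y|, where E₄ = 2C_λ[t*] + C_{t*}[λ]₁(2 + C_{t*}C_λ) and E₂ = C_{t*}C_λ[Q]. -/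
open MeasureTheory

lemma exp_neg_lip' {a b : ℝ} (ha : 0 ≤ a) (hb : 0 ≤ b) :
    |Real.exp (-a) - Real.exp (-b)| ≤ |a - b| := by
  wlog h : a ≤ b generalizing a b
  · rw [abs_sub_comm, abs_sub_comm a b]; exact this hb ha (le_of_not_ge h)
  have h1 : Real.exp (-b) ≤ Real.exp (-a) := Real.exp_le_exp.2 (by linarith)
  have h2 : Real.exp (-a) ≤ 1 := Real.exp_le_one_iff.2 (by linarith)
  have h3 : (a - b) + 1 ≤ Real.exp (a - b) := Real.add_one_le_exp _
  have h4 : Real.exp (-b) = Real.exp (-a) * Real.exp (a - b) := by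
    rw [← Real.exp_add]; ring_nf
  have h5 : (0:ℝ) < Real.exp (-a) := Real.exp_pos _
  rw [abs_of_nonneg (by linarith), abs_of_nonpos (by linarith)]
  nlinarith

lemma K_aux
    {X : Type*} [MetricSpace X]
    (φ : X → ℝ → X) (lam : X → ℝ) (tstar : X → ℝ) (Qw : X → ℝ)
    (Clam Ctstar Cw Llam Ltstar LQ w1 wstar : ℝ)
    (hClam : 0 ≤ Clam) (hCw : 0 ≤ Cw) (hLlam : 0 ≤ Llam) (hLtstar : 0 ≤ Ltstar)
    (hLQ : 0 ≤ LQ) (hw1 : 0 ≤ w1) (hwstar : 0 ≤ wstar)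
    (hlam_nonneg : ∀ z, 0 ≤ lam z)
    (hlam_bdd : ∀ z, lam z ≤ Clam)
    (htstar_nonneg : ∀ z, 0 ≤ tstar z)
    (htstar_bdd : ∀ z, tstar z ≤ Ctstar)
    (htstar_lip : ∀ x y : X, |tstar x - tstar y| ≤ Ltstar * dist x y)
    (hQw_bdd : ∀ z, |Qw z| ≤ Cw)
    (hmeas_lam : ∀ x : X, Measurable (fun s => lam (φ x s)))
    (hmeas_Qw : ∀ x : X, Measurable (fun s => Qw (φ x s)))
    (hlam_lip : ∀ x y : X, ∀ u ∈ Set.Ico (0:ℝ) (min (tstar x) (tstar y)),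
      |lam (φ x u) - lam (φ y u)| ≤ Llam * dist x y)
    (hQw_lip : ∀ x y : X, ∀ u ∈ Set.Icc (0:ℝ) (min (tstar x) (tstar y)),
      |Qw (φ x u) - Qw (φ y u)| ≤ LQ * w1 * dist x y)
    (hQw_lip_star : ∀ x y : X,
      |Qw (φ x (tstar x)) - Qw (φ y (tstar y))| ≤ LQ * wstar * dist x y)
    (x y : X) (hle : tstar y ≤ tstar x) :
    |((∫ s in (0:ℝ)..(tstar x),
        lam (φ x s) * Qw (φ x s) * Real.exp (-(∫ v in (0:ℝ)..s, lam (φ x v))))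
      + Qw (φ x (tstar x)) * Real.exp (-(∫ v in (0:ℝ)..(tstar x), lam (φ x v))))
     - ((∫ s in (0:ℝ)..(tstar y),
        lam (φ y s) * Qw (φ y s) * Real.exp (-(∫ v in (0:ℝ)..s, lam (φ y v))))
      + Qw (φ y (tstar y)) * Real.exp (-(∫ v in (0:ℝ)..(tstar y), lam (φ y v))))|
    ≤ (Cw * (2 * Clam * Ltstar + Ctstar * Llam * (2 + Ctstar * Clam))
        + w1 * (Ctstar * Clam * LQ) + wstar * LQ) * dist x y := by
  have hd : 0 ≤ dist x y := dist_nonneg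
  have hm0 : 0 ≤ tstar y := htstar_nonneg y
  have hM0 : 0 ≤ tstar x := htstar_nonneg x
  have hmC : tstar y ≤ Ctstar := htstar_bdd y
  have hmin : min (tstar x) (tstar y) = tstar y := min_eq_right hle
  have hMm : tstar x - tstar y ≤ Ltstar * dist x y := by
    have h := htstar_lip x y
    rwa [abs_of_nonneg (by linarith)] at h
  -- integrability of lam along flow
  have hInt : ∀ z : X, ∀ a b : ℝ, IntervalIntegrable (fun s => lam (φ z s)) volume a b := by
    intro z a b
    refine IntervalIntegrable.mono_fun' (g := fun _ => Clam) intervalIntegrable_const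
      ((hmeas_lam z).aestronglyMeasurable.restrict) ?_
    filter_upwards with s
    rw [Real.norm_eq_abs, abs_of_nonneg (hlam_nonneg _)]
    exact hlam_bdd _
  have hGsub : ∀ z : X, ∀ a b : ℝ,
      (∫ v in (0:ℝ)..b, lam (φ z v)) - (∫ v in (0:ℝ)..a, lam (φ z v))
      = ∫ v in a..b, lam (φ z v) := fun z a b =>
    intervalIntegral.integral_interval_sub_left (hInt z 0 b) (hInt z 0 a)
  have hG_lip_t : ∀ z : X, ∀ a b : ℝ,
      |(∫ v in (0:ℝ)..b, lam (φ z v)) - (∫ v in (0:ℝ)..a, lam (φ z v))| ≤ Clam * |b - a| := by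
    intro z a b
    rw [hGsub]
    have := intervalIntegral.norm_integral_le_of_norm_le_const
      (f := fun v => lam (φ z v)) (a := a) (b := b) (C := Clam) (fun u _ => by
        rw [Real.norm_eq_abs, abs_of_nonneg (hlam_nonneg _)]; exact hlam_bdd _)
    simpa using this
  have hG_nonneg : ∀ z : X, ∀ s : ℝ, 0 ≤ s → 0 ≤ ∫ v in (0:ℝ)..s, lam (φ z v) := by
    intro z s hs
    exact intervalIntegral.integral_nonneg hs (fun u _ => hlam_nonneg _)
  have hexp_le : ∀ z : X, ∀ s : ℝ, 0 ≤ s →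
      Real.exp (-(∫ v in (0:ℝ)..s, lam (φ z v))) ≤ 1 :=
    fun z s hs => Real.exp_le_one_iff.2 (by linarith [hG_nonneg z s hs])
  have hG_cont : ∀ z : X, Continuous fun s => ∫ v in (0:ℝ)..s, lam (φ z v) := by
    intro z
    have : LipschitzWith (Real.toNNReal Clam) (fun s => ∫ v in (0:ℝ)..s, lam (φ z v)) := by
      apply LipschitzWith.of_dist_le_mul
      intro a b
      rw [Real.dist_eq, Real.dist_eq, Real.coe_toNNReal Clam hClam]
      simpa [abs_sub_comm] using hG_lip_t z b a
    exact this.continuous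
  have hmeas_f : ∀ z : X, Measurable fun s =>
      lam (φ z s) * Qw (φ z s) * Real.exp (-(∫ v in (0:ℝ)..s, lam (φ z v))) := by
    intro z
    exact ((hmeas_lam z).mul (hmeas_Qw z)).mul
      ((Real.continuous_exp.comp (hG_cont z).neg).measurable)
  have hIntf : ∀ z : X, ∀ a b : ℝ, 0 ≤ a → a ≤ b →
      IntervalIntegrable (fun s => lam (φ z s) * Qw (φ z s) *
        Real.exp (-(∫ v in (0:ℝ)..s, lam (φ z v)))) volume a b := by
    intro z a b ha hab
    refine IntervalIntegrable.mono_fun' (g := fun _ => Clam * Cw) intervalIntegrable_const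
      ((hmeas_f z).aestronglyMeasurable.restrict) ?_
    rw [Set.uIoc_of_le hab]
    filter_upwards [ae_restrict_mem measurableSet_Ioc] with s hs
    have hs0 : 0 ≤ s := le_of_lt (lt_of_le_of_lt ha hs.1)
    have he : |Real.exp (-(∫ v in (0:ℝ)..s, lam (φ z v)))| ≤ 1 := by
      rw [Real.abs_exp]; exact hexp_le z s hs0
    have hq : |Qw (φ z s)| ≤ Cw := hQw_bdd _
    have hl : |lam (φ z s)| ≤ Clam := by
      rw [abs_of_nonneg (hlam_nonneg _)]; exact hlam_bdd _
    rw [Real.norm_eq_abs, abs_mul, abs_mul]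
    calc |lam (φ z s)| * |Qw (φ z s)| * |Real.exp (-(∫ v in (0:ℝ)..s, lam (φ z v)))|
        ≤ Clam * Cw * 1 := by gcongr
      _ = Clam * Cw := by ring
  -- a.e. avoidance of the endpoint tstar y
  have hne : ∀ᵐ u : ℝ, u ≠ tstar y := by
    rw [ae_iff]
    simp only [not_not, Set.setOf_eq_eq_singleton]
    exact measure_singleton _
  -- difference of the primitives in space
  have hGdiff : ∀ s : ℝ, 0 ≤ s → s ≤ tstar y →
      |(∫ v in (0:ℝ)..s, lam (φ x v)) - (∫ v in (0:ℝ)..s, lam (φ y v))|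
        ≤ Llam * dist x y * s := by
    intro s hs0 hsm
    rw [← intervalIntegral.integral_sub (hInt x 0 s) (hInt y 0 s)]
    have h := intervalIntegral.norm_integral_le_of_norm_le_const_ae
      (f := fun v => lam (φ x v) - lam (φ y v)) (a := 0) (b := s)
      (C := Llam * dist x y) ?side
    case side =>
      filter_upwards [hne] with u hu hu'
      rw [Set.uIoc_of_le hs0] at hu'
      have hmem : u ∈ Set.Ico (0:ℝ) (min (tstar x) (tstar y)) := by
        rw [hmin]
        exact ⟨hu'.1.le, lt_of_le_of_ne (le_trans hu'.2 hsm) hu⟩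
      simpa [Real.norm_eq_abs] using hlam_lip x y u hmem
    rw [Real.norm_eq_abs, sub_zero, abs_of_nonneg hs0] at h
    exact h
  -- T1 : difference of integrals on [0, tstar y]
  have hCt : 0 ≤ Ctstar := le_trans hm0 hmC
  set C1 : ℝ := Llam * dist x y * Cw + Clam * (LQ * w1 * dist x y)
      + Clam * (Cw * (Llam * dist x y * Ctstar)) with hC1_def
  have hC1 : 0 ≤ C1 := by rw [hC1_def]; positivity
  have hT1 : |(∫ s in (0:ℝ)..(tstar y),
        lam (φ x s) * Qw (φ x s) * Real.exp (-(∫ v in (0:ℝ)..s, lam (φ x v))))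
      - (∫ s in (0:ℝ)..(tstar y),
        lam (φ y s) * Qw (φ y s) * Real.exp (-(∫ v in (0:ℝ)..s, lam (φ y v))))|
      ≤ C1 * tstar y := by
    rw [← intervalIntegral.integral_sub (hIntf x 0 (tstar y) le_rfl hm0)
      (hIntf y 0 (tstar y) le_rfl hm0)]
    have h := intervalIntegral.norm_integral_le_of_norm_le_const_ae
      (a := 0) (b := tstar y) (C := C1)
      (f := fun s => lam (φ x s) * Qw (φ x s) * Real.exp (-(∫ v in (0:ℝ)..s, lam (φ x v)))
        - lam (φ y s) * Qw (φ y s) * Real.exp (-(∫ v in (0:ℝ)..s, lam (φ y v)))) ?ptw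
    case ptw =>
      filter_upwards [hne] with s hs hs'
      rw [Set.uIoc_of_le hm0] at hs'
      have hs0 : 0 ≤ s := hs'.1.le
      have hsm : s ≤ tstar y := hs'.2
      set a1 := lam (φ x s); set a2 := lam (φ y s)
      set q1 := Qw (φ x s); set q2 := Qw (φ y s)
      set e1 := Real.exp (-(∫ v in (0:ℝ)..s, lam (φ x v))) with he1_def
      set e2 := Real.exp (-(∫ v in (0:ℝ)..s, lam (φ y v))) with he2_def
      have ha : |a1 - a2| ≤ Llam * dist x y := by
        refine hlam_lip x y s ?_
        rw [hmin]
        exact ⟨hs0, lt_of_le_of_ne hsm hs⟩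
      have hq : |q1 - q2| ≤ LQ * w1 * dist x y := by
        refine hQw_lip x y s ?_
        rw [hmin]
        exact ⟨hs0, hsm⟩
      have he : |e1 - e2| ≤ Llam * dist x y * Ctstar := by
        have h1 := exp_neg_lip' (hG_nonneg x s hs0) (hG_nonneg y s hs0)
        have h2 := hGdiff s hs0 hsm
        have h3 : Llam * dist x y * s ≤ Llam * dist x y * Ctstar :=
          mul_le_mul_of_nonneg_left (le_trans hsm hmC) (by positivity)
        rw [he1_def, he2_def]
        exact le_trans h1 (le_trans h2 h3)
      have he1b : |e1| ≤ 1 := by rw [he1_def, Real.abs_exp]; exact hexp_le x s hs0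
      have ha1b : |a2| ≤ Clam := by
        rw [abs_of_nonneg (hlam_nonneg _)]; exact hlam_bdd _
      have hq1b : |q1| ≤ Cw := hQw_bdd _
      have hq2b : |q2| ≤ Cw := hQw_bdd _
      have key : a1 * q1 * e1 - a2 * q2 * e2 =
          (a1 - a2) * q1 * e1 + a2 * (q1 - q2) * e1 + a2 * q2 * (e1 - e2) := by ring
      rw [Real.norm_eq_abs, key]
      have t1 : |(a1 - a2) * q1 * e1| ≤ Llam * dist x y * Cw := by
        rw [abs_mul, abs_mul]
        calc |a1 - a2| * |q1| * |e1| ≤ (Llam * dist x y) * Cw * 1 := by gcongr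
          _ = Llam * dist x y * Cw := by ring
      have t2 : |a2 * (q1 - q2) * e1| ≤ Clam * (LQ * w1 * dist x y) := by
        rw [abs_mul, abs_mul]
        calc |a2| * |q1 - q2| * |e1| ≤ Clam * (LQ * w1 * dist x y) * 1 := by gcongr
          _ = Clam * (LQ * w1 * dist x y) := by ring
      have t3 : |a2 * q2 * (e1 - e2)| ≤ Clam * (Cw * (Llam * dist x y * Ctstar)) := by
        rw [abs_mul, abs_mul]
        calc |a2| * |q2| * |e1 - e2| ≤ Clam * Cw * (Llam * dist x y * Ctstar) := by gcongr
          _ = Clam * (Cw * (Llam * dist x y * Ctstar)) := by ring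
      calc |(a1 - a2) * q1 * e1 + a2 * (q1 - q2) * e1 + a2 * q2 * (e1 - e2)|
          ≤ |(a1 - a2) * q1 * e1 + a2 * (q1 - q2) * e1| + |a2 * q2 * (e1 - e2)| := abs_add_le _ _
        _ ≤ |(a1 - a2) * q1 * e1| + |a2 * (q1 - q2) * e1| + |a2 * q2 * (e1 - e2)| := by
            have := abs_add_le ((a1 - a2) * q1 * e1) (a2 * (q1 - q2) * e1)
            linarith
        _ ≤ C1 := by rw [hC1_def]; linarith
    rw [Real.norm_eq_abs, sub_zero, abs_of_nonneg hm0] at h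
    exact h
  -- T2 : integral over [tstar y, tstar x]
  have hT2 : |∫ s in (tstar y)..(tstar x),
      lam (φ x s) * Qw (φ x s) * Real.exp (-(∫ v in (0:ℝ)..s, lam (φ x v)))|
      ≤ Clam * Cw * (tstar x - tstar y) := by
    have h := intervalIntegral.norm_integral_le_of_norm_le_const
      (a := tstar y) (b := tstar x) (C := Clam * Cw)
      (f := fun s => lam (φ x s) * Qw (φ x s) * Real.exp (-(∫ v in (0:ℝ)..s, lam (φ x v))))
      ?ptw2
    case ptw2 =>
      intro u hu
      rw [Set.uIoc_of_le hle] at hu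
      have hu0 : 0 ≤ u := le_trans hm0 hu.1.le
      have he : |Real.exp (-(∫ v in (0:ℝ)..u, lam (φ x v)))| ≤ 1 := by
        rw [Real.abs_exp]; exact hexp_le x u hu0
      have hl : |lam (φ x u)| ≤ Clam := by
        rw [abs_of_nonneg (hlam_nonneg _)]; exact hlam_bdd _
      have hq : |Qw (φ x u)| ≤ Cw := hQw_bdd _
      rw [Real.norm_eq_abs, abs_mul, abs_mul]
      calc |lam (φ x u)| * |Qw (φ x u)| * |Real.exp (-(∫ v in (0:ℝ)..u, lam (φ x v)))|
          ≤ Clam * Cw * 1 := by gcongr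
        _ = Clam * Cw := by ring
    rwa [Real.norm_eq_abs, abs_of_nonneg (by linarith : (0:ℝ) ≤ tstar x - tstar y)] at h
  -- T3 : the boundary terms
  have hT3 : |Qw (φ x (tstar x)) * Real.exp (-(∫ v in (0:ℝ)..(tstar x), lam (φ x v)))
      - Qw (φ y (tstar y)) * Real.exp (-(∫ v in (0:ℝ)..(tstar y), lam (φ y v)))|
      ≤ LQ * wstar * dist x y
        + Cw * (Clam * (tstar x - tstar y) + Llam * dist x y * tstar y) := by
    set Q1 := Qw (φ x (tstar x)) with hQ1d
    set Q2 := Qw (φ y (tstar y)) with hQ2d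
    set E1 := Real.exp (-(∫ v in (0:ℝ)..(tstar x), lam (φ x v))) with hE1
    set E2 := Real.exp (-(∫ v in (0:ℝ)..(tstar y), lam (φ y v))) with hE2
    have hQd : |Q1 - Q2| ≤ LQ * wstar * dist x y := hQw_lip_star x y
    have hE1b : |E1| ≤ 1 := by rw [hE1, Real.abs_exp]; exact hexp_le x _ hM0
    have hQ2b : |Q2| ≤ Cw := hQw_bdd _
    have hEd : |E1 - E2| ≤ Clam * (tstar x - tstar y) + Llam * dist x y * tstar y := by
      have h1 := exp_neg_lip' (hG_nonneg x _ hM0) (hG_nonneg y _ hm0)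
      have h2 : |(∫ v in (0:ℝ)..(tstar x), lam (φ x v))
            - (∫ v in (0:ℝ)..(tstar y), lam (φ y v))|
          ≤ Clam * (tstar x - tstar y) + Llam * dist x y * tstar y := by
        have hA := hG_lip_t x (tstar y) (tstar x)
        have hB := hGdiff (tstar y) hm0 le_rfl
        rw [abs_of_nonneg (by linarith : (0:ℝ) ≤ tstar x - tstar y)] at hA
        calc |(∫ v in (0:ℝ)..(tstar x), lam (φ x v))
              - (∫ v in (0:ℝ)..(tstar y), lam (φ y v))|
            ≤ |(∫ v in (0:ℝ)..(tstar x), lam (φ x v))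
                - (∫ v in (0:ℝ)..(tstar y), lam (φ x v))|
              + |(∫ v in (0:ℝ)..(tstar y), lam (φ x v))
                - (∫ v in (0:ℝ)..(tstar y), lam (φ y v))| := abs_sub_le _ _ _
          _ ≤ Clam * (tstar x - tstar y) + Llam * dist x y * tstar y := by linarith
      rw [hE1, hE2]
      exact le_trans h1 h2
    have key : Q1 * E1 - Q2 * E2 = (Q1 - Q2) * E1 + Q2 * (E1 - E2) := by ring
    rw [key]
    calc |(Q1 - Q2) * E1 + Q2 * (E1 - E2)|
        ≤ |(Q1 - Q2) * E1| + |Q2 * (E1 - E2)| := abs_add_le _ _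
      _ ≤ LQ * wstar * dist x y * 1
          + Cw * (Clam * (tstar x - tstar y) + Llam * dist x y * tstar y) := by
          rw [abs_mul, abs_mul]; gcongr
      _ = LQ * wstar * dist x y
          + Cw * (Clam * (tstar x - tstar y) + Llam * dist x y * tstar y) := by ring
  -- split the x-integral
  have hsplit : (∫ s in (0:ℝ)..(tstar x),
        lam (φ x s) * Qw (φ x s) * Real.exp (-(∫ v in (0:ℝ)..s, lam (φ x v))))
      = (∫ s in (0:ℝ)..(tstar y),
          lam (φ x s) * Qw (φ x s) * Real.exp (-(∫ v in (0:ℝ)..s, lam (φ x v))))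
        + ∫ s in (tstar y)..(tstar x),
          lam (φ x s) * Qw (φ x s) * Real.exp (-(∫ v in (0:ℝ)..s, lam (φ x v))) :=
    (intervalIntegral.integral_add_adjacent_intervals (hIntf x 0 (tstar y) le_rfl hm0)
      (hIntf x (tstar y) (tstar x) hm0 hle)).symm
  rw [hsplit]
  have tri : ∀ A B I2 bx by' : ℝ,
      |(A + I2 + bx) - (B + by')| ≤ |A - B| + |I2| + |bx - by'| := by
    intro A B I2 bx by'
    have h1 : (A + I2 + bx) - (B + by') = (A - B) + I2 + (bx - by') := by ring
    rw [h1]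
    calc |(A - B) + I2 + (bx - by')| ≤ |(A - B) + I2| + |bx - by'| := abs_add_le _ _
      _ ≤ |A - B| + |I2| + |bx - by'| := by linarith [abs_add_le (A - B) I2]
  refine le_trans (tri _ _ _ _ _) ?_
  have e1 : C1 * tstar y ≤ C1 * Ctstar := mul_le_mul_of_nonneg_left hmC hC1
  have e2 : Clam * Cw * (tstar x - tstar y) ≤ Clam * Cw * (Ltstar * dist x y) :=
    mul_le_mul_of_nonneg_left hMm (by positivity)
  have e3 : Cw * (Clam * (tstar x - tstar y) + Llam * dist x y * tstar y)
      ≤ Cw * (Clam * (Ltstar * dist x y) + Llam * dist x y * Ctstar) := by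
    refine mul_le_mul_of_nonneg_left ?_ hCw
    have h1 := mul_le_mul_of_nonneg_left hMm hClam
    have h2 := mul_le_mul_of_nonneg_left hmC (show (0:ℝ) ≤ Llam * dist x y by positivity)
    linarith
  have hring : C1 * Ctstar + Clam * Cw * (Ltstar * dist x y)
      + (LQ * wstar * dist x y
        + Cw * (Clam * (Ltstar * dist x y) + Llam * dist x y * Ctstar))
      = (Cw * (2 * Clam * Ltstar + Ctstar * Llam * (2 + Ctstar * Clam))
        + w1 * (Ctstar * Clam * LQ) + wstar * LQ) * dist x y := by
    rw [hC1_def]; ring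
  linarith [hT1, hT2, hT3]
theorem K_operator_lipschitz
    {X : Type*} [MetricSpace X]
    (φ : X → ℝ → X) (lam : X → ℝ) (tstar : X → ℝ) (Qw : X → ℝ)
    (Clam Ctstar Cw Llam Ltstar LQ w1 w2 wstar : ℝ)
    (hClam : 0 ≤ Clam) (hCw : 0 ≤ Cw) (hLlam : 0 ≤ Llam) (hLtstar : 0 ≤ Ltstar)
    (hLQ : 0 ≤ LQ) (hw1 : 0 ≤ w1) (hw2 : 0 ≤ w2) (hwstar : 0 ≤ wstar)
    (hlam_nonneg : ∀ z, 0 ≤ lam z)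
    (hlam_bdd : ∀ z, lam z ≤ Clam)
    (htstar_nonneg : ∀ z, 0 ≤ tstar z)
    (htstar_bdd : ∀ z, tstar z ≤ Ctstar)
    (htstar_lip : ∀ x y : X, |tstar x - tstar y| ≤ Ltstar * dist x y)
    (hQw_bdd : ∀ z, |Qw z| ≤ Cw)
    (hmeas_lam : ∀ x : X, Measurable (fun s => lam (φ x s)))
    (hmeas_Qw : ∀ x : X, Measurable (fun s => Qw (φ x s)))
    (hlam_lip : ∀ x y : X, ∀ u ∈ Set.Ico (0:ℝ) (min (tstar x) (tstar y)),
      |lam (φ x u) - lam (φ y u)| ≤ Llam * dist x y)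
    (hQw_lip : ∀ x y : X, ∀ u ∈ Set.Icc (0:ℝ) (min (tstar x) (tstar y)),
      |Qw (φ x u) - Qw (φ y u)| ≤ LQ * w1 * dist x y)
    (hQw_lip_star : ∀ x y : X,
      |Qw (φ x (tstar x)) - Qw (φ y (tstar y))| ≤ LQ * wstar * dist x y)
    (Kw : X → ℝ)
    (hKw : ∀ x, Kw x =
      (∫ s in (0:ℝ)..(tstar x),
        lam (φ x s) * Qw (φ x s) * Real.exp (-(∫ v in (0:ℝ)..s, lam (φ x v))))
      + Qw (φ x (tstar x)) *
          Real.exp (-(∫ v in (0:ℝ)..(tstar x), lam (φ x v)))) :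
    ∀ x y : X, |Kw x - Kw y| ≤
      (Cw * (2 * Clam * Ltstar + Ctstar * Llam * (2 + Ctstar * Clam))
        + w1 * (Ctstar * Clam * LQ) + wstar * LQ) * dist x y := by
  intro x y
  rw [hKw x, hKw y]
  rcases le_total (tstar y) (tstar x) with h | h
  · exact K_aux φ lam tstar Qw Clam Ctstar Cw Llam Ltstar LQ w1 wstar
      hClam hCw hLlam hLtstar hLQ hw1 hwstar hlam_nonneg hlam_bdd htstar_nonneg
      htstar_bdd htstar_lip hQw_bdd hmeas_lam hmeas_Qw hlam_lip hQw_lip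
      hQw_lip_star x y h
  · rw [abs_sub_comm, dist_comm]
    exact K_aux φ lam tstar Qw Clam Ctstar Cw Llam Ltstar LQ w1 wstar
      hClam hCw hLlam hLtstar hLQ hw1 hwstar hlam_nonneg hlam_bdd htstar_nonneg
      htstar_bdd htstar_lip hQw_bdd hmeas_lam hmeas_Qw hlam_lip hQw_lip
      hQw_lip_star y x h
end
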